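/- Let β ∈ (β̄, μ_1) and let C′(β) denote the entrywise derivative of the matrix-valued function C at β. Then for every vector u ∈ ℝⁿ orthogonal to b_1(β) one has ⟨C′(β)·u, u⟩ = f′(β)·|u|², where ⟨·,·⟩ and |·| are the standard inner product and norm on ℝⁿ. -/

import Mathlib

/-!
Writing `γ = b₁(β)`, the matrix `D(β)` equals `I + β γ γᵀ`, so `C(β) = f(β) I + (f(β) - 1) β γ γᵀ`
and `⟨C(β) u, u⟩ = f(β) |u|² + (f(β) - 1) β ⟨γ(β), u⟩²`. The second summand vanishes to second
order at a `β` where `u ⊥ γ(β)`, so only `f'(β) |u|²` survives in the derivative.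
-/

open Matrix Filter Topology

variable {ι : Type*}

theorem smul_one_add_smul_vecMulVec_mulVec_dotProduct [Fintype ι] [DecidableEq ι] (a c : ℝ)
    (γ u : ι → ℝ) :
    ((a • (1 : Matrix ι ι ℝ) + c • vecMulVec γ γ) *ᵥ u) ⬝ᵥ u =
      a * (u ⬝ᵥ u) + c * (γ ⬝ᵥ u) ^ 2 := by
  simp only [add_mulVec, smul_mulVec, one_mulVec, vecMulVec_mulVec, add_dotProduct,
    smul_dotProduct, op_smul_eq_smul, smul_eq_mul, dotProduct_comm γ u]
  ring

theorem hasDerivAt_mulVec_dotProduct [Fintype ι] {C : ℝ → Matrix ι ι ℝ} {C' : Matrix ι ι ℝ}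
    {β : ℝ} (hC : ∀ i j, HasDerivAt (fun b => C b i j) (C' i j) β) (u : ι → ℝ) :
    HasDerivAt (fun b => (C b *ᵥ u) ⬝ᵥ u) ((C' *ᵥ u) ⬝ᵥ u) β :=
  HasDerivAt.fun_sum fun i _ =>
    (HasDerivAt.fun_sum fun j _ => (hC i j).mul_const (u j)).mul_const (u i)

theorem differentiableAt_dotProduct_const [Fintype ι] {γ : ℝ → ι → ℝ} {β : ℝ}
    (hγ : ∀ i, DifferentiableAt ℝ (fun b => γ b i) β) (u : ι → ℝ) :
    DifferentiableAt ℝ (fun b => γ b ⬝ᵥ u) β := by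
  simp only [dotProduct]
  fun_prop

theorem mulVec_dotProduct_eq_of_eventuallyEq_rankOne [Fintype ι] [DecidableEq ι]
    {C : ℝ → Matrix ι ι ℝ} {C' : Matrix ι ι ℝ} {a c : ℝ → ℝ} {γ : ℝ → ι → ℝ} {β a' : ℝ}
    (hC_eq : ∀ᶠ b in 𝓝 β, C b = a b • 1 + c b • vecMulVec (γ b) (γ b))
    (hC : ∀ i j, HasDerivAt (fun b => C b i j) (C' i j) β) (ha : HasDerivAt a a' β)
    (hc : DifferentiableAt ℝ c β) (hγ : ∀ i, DifferentiableAt ℝ (fun b => γ b i) β)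
    {u : ι → ℝ} (hu : γ β ⬝ᵥ u = 0) :
    (C' *ᵥ u) ⬝ᵥ u = a' * (u ⬝ᵥ u) := by
  have hγu := (differentiableAt_dotProduct_const hγ u).hasDerivAt
  have hrank : HasDerivAt (fun b => a b * (u ⬝ᵥ u) + c b * (γ b ⬝ᵥ u) ^ 2)
      (a' * (u ⬝ᵥ u)) β := by
    simpa [hu] using
      (ha.mul_const (u ⬝ᵥ u)).fun_add (hc.hasDerivAt.fun_mul (hγu.fun_pow 2))
  refine (hasDerivAt_mulVec_dotProduct hC u).unique (hrank.congr_of_eventuallyEq ?_)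
  filter_upwards [hC_eq] with b hb
  rw [hb, smul_one_add_smul_vecMulVec_mulVec_dotProduct]


noncomputable def gammaVec (μ : ι → ℝ) (b : ℝ) : ι → ℝ := fun i => (√(μ i - b))⁻¹

noncomputable def dMatrix [DecidableEq ι] (μ : ι → ℝ) (b : ℝ) : Matrix ι ι ℝ :=
  of fun i j => if i = j then μ i / (μ i - b) else b / √((μ i - b) * (μ j - b))

theorem dMatrix_eq_one_add_smul_vecMulVec [DecidableEq ι] {μ : ι → ℝ} {b : ℝ}
    (hb : ∀ i, b < μ i) :
    dMatrix μ b = 1 + b • vecMulVec (gammaVec μ b) (gammaVec μ b) := by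
  ext i j
  have hi := sub_pos.2 (hb i)
  simp only [dMatrix, gammaVec, of_apply, Matrix.add_apply, one_apply, Matrix.smul_apply,
    vecMulVec_apply, smul_eq_mul, ← mul_inv]
  split_ifs with h
  · subst h
    rw [Real.mul_self_sqrt hi.le]
    field_simp
    ring
  · rw [← Real.sqrt_mul hi.le, zero_add, div_eq_mul_inv]

theorem differentiableAt_gammaVec {μ : ι → ℝ} {β : ℝ} (i : ι) (hβ : β < μ i) :
    DifferentiableAt ℝ (fun b => gammaVec μ b i) β := by
  have hpos : 0 < μ i - β := sub_pos.2 hβ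
  exact ((differentiableAt_const _).sub differentiableAt_id).sqrt hpos.ne' |>.inv
    (Real.sqrt_pos.2 hpos).ne'

/-- Let `β ∈ (β̄, μ 0)` and let `C'` be the entrywise derivative at `β` of the
matrix-valued function `C(·) = I + (2/g(·)) D(·)`, and let `f'` be the
derivative of `f(·) = 1 + 2/g(·)` at `β`. Then for every `u ∈ ℝⁿ` orthogonal
to `b₁(β)` one has `⟨C'(β) u, u⟩ = f'(β) |u|²`. -/
theorem stmt_13 (n : ℕ) (hn : 2 ≤ n) (μ : Fin n → ℝ)
    (hμmono : Monotone μ) (g : ℝ → ℝ)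
    (βbar : ℝ)
    (β : ℝ) (hβ : β ∈ Set.Ioo βbar (μ ⟨0, by omega⟩))
    (C : ℝ → Matrix (Fin n) (Fin n) ℝ)
    (hC : ∀ b ∈ Set.Ioo βbar (μ ⟨0, by omega⟩), ∀ i j, C b i j =
      (if i = j then 1 else 0) +
        (2 / g b) * (if i = j then μ i / (μ i - b)
          else b / Real.sqrt ((μ i - b) * (μ j - b))))
    (f : ℝ → ℝ) (hf : ∀ b : ℝ, f b = 1 + 2 / g b)
    (C' : Matrix (Fin n) (Fin n) ℝ)
    (hC' : ∀ i j, HasDerivAt (fun b => C b i j) (C' i j) β)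
    (f' : ℝ) (hf' : HasDerivAt f f' β)
    (b1 : Fin n → ℝ) (hb1 : ∀ j, b1 j = (Real.sqrt (μ j - β))⁻¹) :
    ∀ u : Fin n → ℝ, ∑ k, u k * b1 k = 0 →
      ∑ i, C'.mulVec u i * u i = f' * ∑ i, u i ^ 2 := by
  intro u hu
  have hμ : ∀ b ∈ Set.Ioo βbar (μ ⟨0, by omega⟩), ∀ i, b < μ i :=
    fun b hb i => hb.2.trans_le (hμmono (Nat.zero_le i.val))
  have hC_eq : ∀ᶠ b in 𝓝 β,
      C b = f b • 1 + ((f b - 1) * b) • vecMulVec (gammaVec μ b) (gammaVec μ b) := by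
    filter_upwards [isOpen_Ioo.mem_nhds hβ] with b hb
    have hCD : C b = 1 + (2 / g b) • dMatrix μ b := by
      ext i j
      simp [hC b hb i j, dMatrix, one_apply]
    rw [hCD, dMatrix_eq_one_add_smul_vecMulVec (hμ b hb), hf b]
    module
  have hu' : gammaVec μ β ⬝ᵥ u = 0 := by
    rw [dotProduct_comm]
    simpa [dotProduct, gammaVec, hb1] using hu
  have key := mulVec_dotProduct_eq_of_eventuallyEq_rankOne hC_eq hC' hf'
    ((hf'.differentiableAt.sub_const 1).mul differentiableAt_id)
    (fun i => differentiableAt_gammaVec i (hμ β hβ i)) hu'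
  simpa [dotProduct, sq] using key
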